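/- Let M be a partial Steiner triple system satisfying the projective Pappus axiom, and m > 2 an integer. Then in Π(m,M), for every hexagon p1,…,p6 (six distinct points) inscribed into two lines (i.e. {p1,p3,p5} and {p2,p4,p6} are lines), if the three diagonal points q1, q2, q3 exist — q1 lying on the line through p1,p2 and on the line through p4,p5; q2 on the line through p2,p3 and the line through p5,p6; q3 on the line through p3,p4 and the line through p6,p1 — then {q1,q2,q3} is a line of Π(m,M). -/
import Mathlib


/-- A partial Steiner triple system on point set `P`, given by its set of lines. -/
def IsPSTS {P : Type*} (L : Set (Set P)) : Prop :=
  (∀ l ∈ L, l.ncard = 3) ∧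
  ∀ l₁ ∈ L, ∀ l₂ ∈ L, ∀ p q : P, p ≠ q → p ∈ l₁ → q ∈ l₁ → p ∈ l₂ → q ∈ l₂ → l₁ = l₂

/-- The lines of the configuration `m`-weaved from a PSTS with line set `L`. -/
def weaveLines {P : Type*} (m : ℕ) (L : Set (Set P)) : Set (Set (P × ZMod m)) :=
  { w | ∃ (a b c : P) (i j k : ZMod m), ({a, b, c} : Set P) ∈ L ∧
      ((i = j ∧ i = k - 1) ∨ (i = k ∧ i = j - 1) ∨ (j = k ∧ j = i - 1)) ∧
      w = {(a, i), (b, j), (c, k)} }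

/-- The projective Pappus axiom: for any hexagon of six distinct points inscribed into
two lines, if the three diagonal points exist then they are collinear. -/
def PappusAxiom {P : Type*} (L : Set (Set P)) : Prop :=
  ∀ p1 p2 p3 p4 p5 p6 q1 q2 q3 : P,
    List.Pairwise (· ≠ ·) [p1, p2, p3, p4, p5, p6] →
    ({p1, p3, p5} : Set P) ∈ L → ({p2, p4, p6} : Set P) ∈ L →
    ({p1, p2, q1} : Set P) ∈ L → ({p4, p5, q1} : Set P) ∈ L →
    ({p2, p3, q2} : Set P) ∈ L → ({p5, p6, q2} : Set P) ∈ L →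
    ({p3, p4, q3} : Set P) ∈ L → ({p6, p1, q3} : Set P) ∈ L →
    ({q1, q2, q3} : Set P) ∈ L

theorem wp_ncard3 {α : Type*} {a b c : α} (h : ({a, b, c} : Set α).ncard = 3) :
    a ≠ b ∧ a ≠ c ∧ b ≠ c := by
  refine ⟨?_, ?_, ?_⟩ <;> rintro rfl
  · have e : ({a, a, c} : Set α) = {a, c} := by ext z; simp
    rw [e] at h
    have h2 := Set.ncard_insert_le a ({c} : Set α)
    simp only [Set.ncard_singleton] at h2
    omega
  · have e : ({a, b, a} : Set α) = {a, b} := by ext z; simp; tauto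
    rw [e] at h
    have h2 := Set.ncard_insert_le a ({b} : Set α)
    simp only [Set.ncard_singleton] at h2
    omega
  · have e : ({a, b, b} : Set α) = {a, b} := by ext z; simp
    rw [e] at h
    have h2 := Set.ncard_insert_le a ({b} : Set α)
    simp only [Set.ncard_singleton] at h2
    omega

theorem wp_Wswap {m : ℕ} {i j k : ZMod m}
    (h : (i = j ∧ i = k - 1) ∨ (i = k ∧ i = j - 1) ∨ (j = k ∧ j = i - 1)) :
    (j = i ∧ j = k - 1) ∨ (j = k ∧ j = i - 1) ∨ (i = k ∧ i = j - 1) := by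
  rcases h with ⟨h1, h2⟩ | ⟨h1, h2⟩ | ⟨h1, h2⟩
  · exact Or.inl ⟨h1.symm, h1 ▸ h2⟩
  · exact Or.inr (Or.inr ⟨h1, h2⟩)
  · exact Or.inr (Or.inl ⟨h1, h2⟩)

theorem wp_Wrot {m : ℕ} {i j k : ZMod m}
    (h : (i = j ∧ i = k - 1) ∨ (i = k ∧ i = j - 1) ∨ (j = k ∧ j = i - 1)) :
    (j = k ∧ j = i - 1) ∨ (j = i ∧ j = k - 1) ∨ (k = i ∧ k = j - 1) := by
  rcases h with ⟨h1, h2⟩ | ⟨h1, h2⟩ | ⟨h1, h2⟩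
  · exact Or.inr (Or.inl ⟨h1.symm, h1 ▸ h2⟩)
  · exact Or.inr (Or.inr ⟨h1.symm, h1 ▸ h2⟩)
  · exact Or.inl ⟨h1, h2⟩

theorem wp_struct {P : Type*} {L : Set (Set P)} {m : ℕ} (hM : IsPSTS L)
    {l : Set (P × ZMod m)} (hl : l ∈ weaveLines m L)
    {u v w : P × ZMod m} (hu : u ∈ l) (hv : v ∈ l) (hw : w ∈ l)
    (huv : u ≠ v) (huw : u ≠ w) (hvw : v ≠ w) :
    ({u.1, v.1, w.1} : Set P) ∈ L ∧ u.1 ≠ v.1 ∧ u.1 ≠ w.1 ∧ v.1 ≠ w.1 ∧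
      ((u.2 = v.2 ∧ u.2 = w.2 - 1) ∨ (u.2 = w.2 ∧ u.2 = v.2 - 1) ∨
        (v.2 = w.2 ∧ v.2 = u.2 - 1)) := by
  obtain ⟨a, b, c, i, j, k, hL, hW, rfl⟩ := hl
  obtain ⟨hab, hac, hbc⟩ := wp_ncard3 (hM.1 _ hL)
  have racb : ({a, c, b} : Set P) = {a, b, c} := by ext z; simp; tauto
  have rbac : ({b, a, c} : Set P) = {a, b, c} := by ext z; simp; tauto
  have rbca : ({b, c, a} : Set P) = {a, b, c} := by ext z; simp; tauto
  have rcab : ({c, a, b} : Set P) = {a, b, c} := by ext z; simp; tauto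
  have rcba : ({c, b, a} : Set P) = {a, b, c} := by ext z; simp; tauto
  simp only [Set.mem_insert_iff, Set.mem_singleton_iff] at hu hv hw
  rcases hu with rfl | rfl | rfl <;> rcases hv with rfl | rfl | rfl <;>
    rcases hw with rfl | rfl | rfl <;>
    first
      | exact absurd rfl huv
      | exact absurd rfl huw
      | exact absurd rfl hvw
      | exact ⟨hL, hab, hac, hbc, hW⟩
      | exact ⟨by show ({a, c, b} : Set P) ∈ L; rw [racb]; exact hL,
          hac, hab, hbc.symm, wp_Wswap (wp_Wrot (wp_Wrot hW))⟩
      | exact ⟨by show ({b, a, c} : Set P) ∈ L; rw [rbac]; exact hL,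
          hab.symm, hbc, hac, wp_Wswap hW⟩
      | exact ⟨by show ({b, c, a} : Set P) ∈ L; rw [rbca]; exact hL,
          hbc, hab.symm, hac.symm, wp_Wrot hW⟩
      | exact ⟨by show ({c, a, b} : Set P) ∈ L; rw [rcab]; exact hL,
          hac.symm, hbc.symm, hab, wp_Wrot (wp_Wrot hW)⟩
      | exact ⟨by show ({c, b, a} : Set P) ∈ L; rw [rcba]; exact hL,
          hbc.symm, hac.symm, hab.symm, wp_Wswap (wp_Wrot hW)⟩

theorem wp_base_ne {P : Type*} {L : Set (Set P)} {m : ℕ} (hM : IsPSTS L)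
    {l : Set (P × ZMod m)} (hl : l ∈ weaveLines m L)
    {u v : P × ZMod m} (hu : u ∈ l) (hv : v ∈ l) (huv : u ≠ v) : u.1 ≠ v.1 := by
  obtain ⟨a, b, c, i, j, k, hL, hW, rfl⟩ := hl
  obtain ⟨hab, hac, hbc⟩ := wp_ncard3 (hM.1 _ hL)
  simp only [Set.mem_insert_iff, Set.mem_singleton_iff] at hu hv
  rcases hu with rfl | rfl | rfl <;> rcases hv with rfl | rfl | rfl <;>
    first
      | exact absurd rfl huv
      | exact hab | exact hab.symm | exact hac | exact hac.symm
      | exact hbc | exact hbc.symm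

theorem wp_mem_of_line_eq {P : Type*} {L : Set (Set P)} (hM : IsPSTS L)
    {s t : Set P} (h1 : s ∈ L) (h2 : t ∈ L) {p q : P} (hpq : p ≠ q)
    (hps : p ∈ s) (hqs : q ∈ s) (hpt : p ∈ t) (hqt : q ∈ t) {r : P} (hr : r ∈ t) :
    r ∈ s := by
  rw [hM.2 s h1 t h2 p q hpq hps hqs hpt hqt]; exact hr


-- Auto-generated arithmetic key lemma
theorem weave_key {m : ℕ} (hne1 : (1:ZMod m) ≠ 0) (hne2 : (2:ZMod m) ≠ 0)
    (x1 x2 x3 x4 x5 x6 y1 y2 y3 : ZMod m)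
    (h1 : (x1 = x3 ∧ x1 = x5 - 1) ∨ (x1 = x5 ∧ x1 = x3 - 1) ∨ (x3 = x5 ∧ x3 = x1 - 1))
    (h2 : (x2 = x4 ∧ x2 = x6 - 1) ∨ (x2 = x6 ∧ x2 = x4 - 1) ∨ (x4 = x6 ∧ x4 = x2 - 1))
    (h3 : (x1 = x2 ∧ x1 = y1 - 1) ∨ (x1 = y1 ∧ x1 = x2 - 1) ∨ (x2 = y1 ∧ x2 = x1 - 1))
    (h4 : (x4 = x5 ∧ x4 = y1 - 1) ∨ (x4 = y1 ∧ x4 = x5 - 1) ∨ (x5 = y1 ∧ x5 = x4 - 1))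
    (h5 : (x2 = x3 ∧ x2 = y2 - 1) ∨ (x2 = y2 ∧ x2 = x3 - 1) ∨ (x3 = y2 ∧ x3 = x2 - 1))
    (h6 : (x5 = x6 ∧ x5 = y2 - 1) ∨ (x5 = y2 ∧ x5 = x6 - 1) ∨ (x6 = y2 ∧ x6 = x5 - 1))
    (h7 : (x3 = x4 ∧ x3 = y3 - 1) ∨ (x3 = y3 ∧ x3 = x4 - 1) ∨ (x4 = y3 ∧ x4 = x3 - 1))
    (h8 : (x6 = x1 ∧ x6 = y3 - 1) ∨ (x6 = y3 ∧ x6 = x1 - 1) ∨ (x1 = y3 ∧ x1 = x6 - 1)) :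
    (y1 = y2 ∧ y1 = y3 - 1) ∨ (y1 = y3 ∧ y1 = y2 - 1) ∨ (y2 = y3 ∧ y2 = y1 - 1) := by
  rcases h1 with ⟨e0a, e0b⟩ | ⟨e0a, e0b⟩ | ⟨e0a, e0b⟩
  · rcases h2 with ⟨e1a, e1b⟩ | ⟨e1a, e1b⟩ | ⟨e1a, e1b⟩
    · rcases h3 with ⟨e2a, e2b⟩ | ⟨e2a, e2b⟩ | ⟨e2a, e2b⟩
      · rcases h4 with ⟨e3a, e3b⟩ | ⟨e3a, e3b⟩ | ⟨e3a, e3b⟩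
        · exact absurd (show ((1:ZMod m)) = 0 by linear_combination e0b -e1a -e2a -e3a) hne1
        · exact absurd (show ((1:ZMod m)) = 0 by linear_combination -e1a -e2a + e2b -e3a) hne1
        · exact absurd (show ((2:ZMod m)) = 0 by linear_combination e0b -e1a -e2a + e3b) hne2
      · rcases h4 with ⟨e3a, e3b⟩ | ⟨e3a, e3b⟩ | ⟨e3a, e3b⟩
        · exact absurd (show ((2:ZMod m)) = 0 by linear_combination e1a -e2a + e2b + e3b) hne2
        · exact absurd (show ((1:ZMod m)) = 0 by linear_combination e1a -e2a + e2b + e3a) hne1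
        · exact absurd (show ((1:ZMod m)) = 0 by linear_combination e0b -e2a + e3a) hne1
      · rcases h4 with ⟨e3a, e3b⟩ | ⟨e3a, e3b⟩ | ⟨e3a, e3b⟩
        · exact absurd (show ((1:ZMod m)) = 0 by linear_combination e1a -e2a + e3b) hne1
        · exact absurd (show ((1:ZMod m)) = 0 by linear_combination e0b -e1a + e2b -e3b) hne1
        · exact absurd (show ((1:ZMod m)) = 0 by linear_combination -e1a + e2a -e3a + e3b) hne1
    · rcases h3 with ⟨e2a, e2b⟩ | ⟨e2a, e2b⟩ | ⟨e2a, e2b⟩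
      · rcases h4 with ⟨e3a, e3b⟩ | ⟨e3a, e3b⟩ | ⟨e3a, e3b⟩
        · exact absurd (show ((1:ZMod m)) = 0 by linear_combination e1b + e2a -e2b + e3b) hne1
        · exact absurd (show ((1:ZMod m)) = 0 by linear_combination -e0b + e1b + e2a + e3b) hne1
        · exact absurd (show ((1:ZMod m)) = 0 by linear_combination e0b -e1b -e2a + e3b) hne1
      · rcases h4 with ⟨e3a, e3b⟩ | ⟨e3a, e3b⟩ | ⟨e3a, e3b⟩
        · exact absurd (show ((1:ZMod m)) = 0 by linear_combination -e0b + e1b + e2b + e3a) hne1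
        · exact absurd (show ((2:ZMod m)) = 0 by linear_combination e1b -e2a + e2b + e3a) hne2
        · exact absurd (show ((1:ZMod m)) = 0 by linear_combination e0b -e2a + e3a) hne1
      · rcases h4 with ⟨e3a, e3b⟩ | ⟨e3a, e3b⟩ | ⟨e3a, e3b⟩
        · exact absurd (show ((1:ZMod m)) = 0 by linear_combination e0b -e1b + e2b -e3a) hne1
        · exact absurd (show ((1:ZMod m)) = 0 by linear_combination e1b -e2a + e3a) hne1
        · exact absurd (show ((2:ZMod m)) = 0 by linear_combination e0b -e2a + e2b + e3a) hne2
    · rcases h3 with ⟨e2a, e2b⟩ | ⟨e2a, e2b⟩ | ⟨e2a, e2b⟩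
      · rcases h4 with ⟨e3a, e3b⟩ | ⟨e3a, e3b⟩ | ⟨e3a, e3b⟩
        · exact absurd (show ((1:ZMod m)) = 0 by linear_combination e1b -e2a + e2b -e3b) hne1
        · exact absurd (show ((1:ZMod m)) = 0 by linear_combination e0b + e1b -e2a -e3b) hne1
        · rcases h5 with ⟨e4a, e4b⟩ | ⟨e4a, e4b⟩ | ⟨e4a, e4b⟩
          · rcases h6 with ⟨e5a, e5b⟩ | ⟨e5a, e5b⟩ | ⟨e5a, e5b⟩
            · exact absurd (show ((1:ZMod m)) = 0 by linear_combination e0b -e2a -e4b + e5b) hne1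
            · rcases h7 with ⟨e6a, e6b⟩ | ⟨e6a, e6b⟩ | ⟨e6a, e6b⟩
              · exact absurd (show ((1:ZMod m)) = 0 by linear_combination e0a + e1b -e2a + e6a) hne1
              · exact absurd (show ((1:ZMod m)) = 0 by linear_combination -e0a + e0b -e1a + e5b -e6b) hne1
              · rcases h8 with ⟨e7a, e7b⟩ | ⟨e7a, e7b⟩ | ⟨e7a, e7b⟩
                · exact absurd (show ((1:ZMod m)) = 0 by linear_combination -e1a + e1b -e2a -e7a) hne1
                · exact Or.inl ⟨by linear_combination e2a -e2b + e4b, by linear_combination e0b -e1a -e2b + e5b + e6a⟩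
                · exact absurd (show ((1:ZMod m)) = 0 by linear_combination e1b -e2a -e6a + e7a) hne1
            · exact absurd (show ((1:ZMod m)) = 0 by linear_combination e0b -e1a + e1b -e2a -e5b) hne1
          · exact absurd (show ((1:ZMod m)) = 0 by linear_combination -e0a + e2a + e4b) hne1
          · exact absurd (show ((1:ZMod m)) = 0 by linear_combination e0a -e2a + e4b) hne1
      · rcases h4 with ⟨e3a, e3b⟩ | ⟨e3a, e3b⟩ | ⟨e3a, e3b⟩
        · exact absurd (show ((1:ZMod m)) = 0 by linear_combination e0b + e1b -e2b -e3a) hne1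
        · rcases h5 with ⟨e4a, e4b⟩ | ⟨e4a, e4b⟩ | ⟨e4a, e4b⟩
          · exact absurd (show ((1:ZMod m)) = 0 by linear_combination -e0a + e2b + e4a) hne1
          · exact absurd (show ((2:ZMod m)) = 0 by linear_combination -e0a + e2b + e4b) hne2
          · rcases h6 with ⟨e5a, e5b⟩ | ⟨e5a, e5b⟩ | ⟨e5a, e5b⟩
            · exact absurd (show ((1:ZMod m)) = 0 by linear_combination e0b -e1a + e1b -e2b + e5a) hne1
            · exact absurd (show ((1:ZMod m)) = 0 by linear_combination -e0a + e0b -e4a + e5a) hne1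
            · rcases h7 with ⟨e6a, e6b⟩ | ⟨e6a, e6b⟩ | ⟨e6a, e6b⟩
              · rcases h8 with ⟨e7a, e7b⟩ | ⟨e7a, e7b⟩ | ⟨e7a, e7b⟩
                · exact Or.inl ⟨by linear_combination e0a -e2a + e4a, by linear_combination e0a -e2a + e6b⟩
                · exact absurd (show ((1:ZMod m)) = 0 by linear_combination e0a -e1a + e1b -e2b + e6b -e7a) hne1
                · exact absurd (show ((1:ZMod m)) = 0 by linear_combination e0a + e6b -e7a) hne1
              · exact absurd (show ((1:ZMod m)) = 0 by linear_combination e0a + e1b -e2b + e6b) hne1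
              · exact absurd (show ((1:ZMod m)) = 0 by linear_combination -e0a -e1b + e2b + e6b) hne1
        · exact absurd (show ((1:ZMod m)) = 0 by linear_combination e0b -e2a + e3a) hne1
      · rcases h4 with ⟨e3a, e3b⟩ | ⟨e3a, e3b⟩ | ⟨e3a, e3b⟩
        · rcases h5 with ⟨e4a, e4b⟩ | ⟨e4a, e4b⟩ | ⟨e4a, e4b⟩
          · exact absurd (show ((1:ZMod m)) = 0 by linear_combination e0a + e2b -e4a) hne1
          · rcases h6 with ⟨e5a, e5b⟩ | ⟨e5a, e5b⟩ | ⟨e5a, e5b⟩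
            · rcases h7 with ⟨e6a, e6b⟩ | ⟨e6a, e6b⟩ | ⟨e6a, e6b⟩
              · exact absurd (show ((1:ZMod m)) = 0 by linear_combination -e0a + e0b -e1a + e5a -e6a) hne1
              · rcases h8 with ⟨e7a, e7b⟩ | ⟨e7a, e7b⟩ | ⟨e7a, e7b⟩
                · exact absurd (show ((1:ZMod m)) = 0 by linear_combination e0a -e1a + e1b + e2b + e6a -e7b) hne1
                · exact absurd (show ((1:ZMod m)) = 0 by linear_combination -e1a + e1b + e2b -e7b) hne1
                · exact Or.inl ⟨by linear_combination -e2a + e4a, by linear_combination e0a -e2a + e2b + e6a⟩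
              · exact absurd (show ((1:ZMod m)) = 0 by linear_combination e0a + e1b + e2b -e6b) hne1
            · exact absurd (show ((1:ZMod m)) = 0 by linear_combination e0b -e1b + e2b + e3a -(2:ZMod m) * e4a + (2:ZMod m) * e5a) hne1
            · exact absurd (show ((1:ZMod m)) = 0 by linear_combination -e1a + e1b + e4a -e5a) hne1
          · exact absurd (show ((1:ZMod m)) = 0 by linear_combination (2:ZMod m) * e0a -e0b -e1b + e2b + e3a + (2:ZMod m) * e4b) hne1
        · exact absurd (show ((1:ZMod m)) = 0 by linear_combination e1b + e2a -e3a) hne1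
        · exact absurd (show ((2:ZMod m)) = 0 by linear_combination e0b -e2a + e2b + e3a) hne2
  · rcases h2 with ⟨e1a, e1b⟩ | ⟨e1a, e1b⟩ | ⟨e1a, e1b⟩
    · rcases h3 with ⟨e2a, e2b⟩ | ⟨e2a, e2b⟩ | ⟨e2a, e2b⟩
      · rcases h4 with ⟨e3a, e3b⟩ | ⟨e3a, e3b⟩ | ⟨e3a, e3b⟩
        · rcases h5 with ⟨e4a, e4b⟩ | ⟨e4a, e4b⟩ | ⟨e4a, e4b⟩
          · exact absurd (show ((1:ZMod m)) = 0 by linear_combination e0b -e2a -e4a) hne1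
          · rcases h6 with ⟨e5a, e5b⟩ | ⟨e5a, e5b⟩ | ⟨e5a, e5b⟩
            · exact absurd (show ((1:ZMod m)) = 0 by linear_combination -e0a + e1b + e2a -e5a) hne1
            · rcases h7 with ⟨e6a, e6b⟩ | ⟨e6a, e6b⟩ | ⟨e6a, e6b⟩
              · exact absurd (show ((1:ZMod m)) = 0 by linear_combination e0b -e1a -e2a + e6a) hne1
              · exact absurd (show ((2:ZMod m)) = 0 by linear_combination e0b -e1a -e2a + e6b) hne2
              · rcases h8 with ⟨e7a, e7b⟩ | ⟨e7a, e7b⟩ | ⟨e7a, e7b⟩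
                · exact absurd (show ((1:ZMod m)) = 0 by linear_combination e1b + e2a + e7a) hne1
                · exact absurd (show ((1:ZMod m)) = 0 by linear_combination -e1a + e1b -e6a + e7a) hne1
                · exact Or.inr (Or.inr ⟨by linear_combination e1a -e4a + e6a, by linear_combination -e2a + e2b -e4a⟩)
            · exact absurd (show ((1:ZMod m)) = 0 by linear_combination e1b -e4a + e5a) hne1
          · exact absurd (show ((2:ZMod m)) = 0 by linear_combination e0b -e2a + e4b) hne2
        · exact absurd (show ((1:ZMod m)) = 0 by linear_combination -e1a -e2a + e2b -e3a) hne1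
        · exact absurd (show ((1:ZMod m)) = 0 by linear_combination -e0a + e2b -e3a) hne1
      · rcases h4 with ⟨e3a, e3b⟩ | ⟨e3a, e3b⟩ | ⟨e3a, e3b⟩
        · exact absurd (show ((1:ZMod m)) = 0 by linear_combination -e0a + e1a + e2b + e3a) hne1
        · exact absurd (show ((1:ZMod m)) = 0 by linear_combination e1a -e2a + e2b + e3a) hne1
        · rcases h5 with ⟨e4a, e4b⟩ | ⟨e4a, e4b⟩ | ⟨e4a, e4b⟩
          · rcases h6 with ⟨e5a, e5b⟩ | ⟨e5a, e5b⟩ | ⟨e5a, e5b⟩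
            · exact absurd (show ((1:ZMod m)) = 0 by linear_combination -e0a + e2b + e4b -e5b) hne1
            · exact absurd (show ((1:ZMod m)) = 0 by linear_combination -e0a + e1b + e2b -e5b) hne1
            · rcases h7 with ⟨e6a, e6b⟩ | ⟨e6a, e6b⟩ | ⟨e6a, e6b⟩
              · rcases h8 with ⟨e7a, e7b⟩ | ⟨e7a, e7b⟩ | ⟨e7a, e7b⟩
                · exact absurd (show ((1:ZMod m)) = 0 by linear_combination -e0b + e1b + e2b -e6b + e7b) hne1
                · exact Or.inr (Or.inr ⟨by linear_combination e0b -e2b -e4b + e6b, by linear_combination -e0a + e1b + e2a -e4b + e5b⟩)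
                · exact absurd (show ((1:ZMod m)) = 0 by linear_combination e1b + e2b -e7b) hne1
              · exact absurd (show ((1:ZMod m)) = 0 by linear_combination e0b -e1a -e2b + e6b) hne1
              · exact absurd (show ((1:ZMod m)) = 0 by linear_combination -e0b + e1a + e2b + e6b) hne1
          · exact absurd (show ((1:ZMod m)) = 0 by linear_combination -e0b + e2b + e4b) hne1
          · exact absurd (show ((1:ZMod m)) = 0 by linear_combination e0b -e2b + e4b) hne1
      · rcases h4 with ⟨e3a, e3b⟩ | ⟨e3a, e3b⟩ | ⟨e3a, e3b⟩
        · exact absurd (show ((1:ZMod m)) = 0 by linear_combination e0a -e1a + e2b -e3a) hne1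
        · rcases h5 with ⟨e4a, e4b⟩ | ⟨e4a, e4b⟩ | ⟨e4a, e4b⟩
          · exact absurd (show ((2:ZMod m)) = 0 by linear_combination e0b + e2b -e4a) hne2
          · exact absurd (show ((1:ZMod m)) = 0 by linear_combination e0b + e2b -e4b) hne1
          · rcases h6 with ⟨e5a, e5b⟩ | ⟨e5a, e5b⟩ | ⟨e5a, e5b⟩
            · rcases h7 with ⟨e6a, e6b⟩ | ⟨e6a, e6b⟩ | ⟨e6a, e6b⟩
              · exact absurd (show ((1:ZMod m)) = 0 by linear_combination e1a + e4b -e6a) hne1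
              · rcases h8 with ⟨e7a, e7b⟩ | ⟨e7a, e7b⟩ | ⟨e7a, e7b⟩
                · exact Or.inr (Or.inr ⟨by linear_combination -e4a + e6a, by linear_combination e2a -e4a + e4b⟩)
                · exact absurd (show ((1:ZMod m)) = 0 by linear_combination e0b -e1b + e2b + e6a -e7a) hne1
                · exact absurd (show ((1:ZMod m)) = 0 by linear_combination e0b + e6a -e7a) hne1
              · exact absurd (show ((1:ZMod m)) = 0 by linear_combination e0b -e1a + e2b -e6b) hne1
            · exact absurd (show ((1:ZMod m)) = 0 by linear_combination -e0a + e0b + e4a -e5a) hne1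
            · exact absurd (show ((1:ZMod m)) = 0 by linear_combination e0b -e1b + e2b + e4a -e5a) hne1
        · exact absurd (show ((1:ZMod m)) = 0 by linear_combination e0a -e2a + e2b + e3a) hne1
    · rcases h3 with ⟨e2a, e2b⟩ | ⟨e2a, e2b⟩ | ⟨e2a, e2b⟩
      · rcases h4 with ⟨e3a, e3b⟩ | ⟨e3a, e3b⟩ | ⟨e3a, e3b⟩
        · exact absurd (show ((1:ZMod m)) = 0 by linear_combination -e0a + e1b + e2a + e3a) hne1
        · exact absurd (show ((2:ZMod m)) = 0 by linear_combination -e0a + e1b + e2a + e3b) hne2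
        · exact absurd (show ((1:ZMod m)) = 0 by linear_combination -e0a + e2b -e3a) hne1
      · rcases h4 with ⟨e3a, e3b⟩ | ⟨e3a, e3b⟩ | ⟨e3a, e3b⟩
        · exact absurd (show ((1:ZMod m)) = 0 by linear_combination e0a -e2a -e3a + e3b) hne1
        · exact absurd (show ((1:ZMod m)) = 0 by linear_combination -e0a + e2a -e3a + e3b) hne1
        · exact absurd (show ((1:ZMod m)) = 0 by linear_combination -e0a + e1b + e2b -e3b) hne1
      · rcases h4 with ⟨e3a, e3b⟩ | ⟨e3a, e3b⟩ | ⟨e3a, e3b⟩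
        · exact absurd (show ((2:ZMod m)) = 0 by linear_combination e1b -e2a + e3b) hne2
        · exact absurd (show ((1:ZMod m)) = 0 by linear_combination e1b -e2a + e3a) hne1
        · exact absurd (show ((1:ZMod m)) = 0 by linear_combination e0a -e2a + e2b + e3a) hne1
    · rcases h3 with ⟨e2a, e2b⟩ | ⟨e2a, e2b⟩ | ⟨e2a, e2b⟩
      · rcases h4 with ⟨e3a, e3b⟩ | ⟨e3a, e3b⟩ | ⟨e3a, e3b⟩
        · exact absurd (show ((1:ZMod m)) = 0 by linear_combination e0a + e1b -e2a -e3a) hne1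
        · exact absurd (show ((2:ZMod m)) = 0 by linear_combination e1b -e2a + e2b -e3a) hne2
        · exact absurd (show ((1:ZMod m)) = 0 by linear_combination -e0a + e2b -e3a) hne1
      · rcases h4 with ⟨e3a, e3b⟩ | ⟨e3a, e3b⟩ | ⟨e3a, e3b⟩
        · exact absurd (show ((1:ZMod m)) = 0 by linear_combination -e1b -e2a + e2b + e3b) hne1
        · exact absurd (show ((1:ZMod m)) = 0 by linear_combination -e0a -e1b + e2b + e3b) hne1
        · exact absurd (show ((1:ZMod m)) = 0 by linear_combination e0a + e1b -e2b + e3b) hne1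
      · rcases h4 with ⟨e3a, e3b⟩ | ⟨e3a, e3b⟩ | ⟨e3a, e3b⟩
        · exact absurd (show ((2:ZMod m)) = 0 by linear_combination e0a + e1b + e2b -e3a) hne2
        · exact absurd (show ((1:ZMod m)) = 0 by linear_combination e1b + e2a -e3a) hne1
        · exact absurd (show ((1:ZMod m)) = 0 by linear_combination e0a -e2a + e2b + e3a) hne1
  · rcases h2 with ⟨e1a, e1b⟩ | ⟨e1a, e1b⟩ | ⟨e1a, e1b⟩
    · rcases h3 with ⟨e2a, e2b⟩ | ⟨e2a, e2b⟩ | ⟨e2a, e2b⟩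
      · rcases h4 with ⟨e3a, e3b⟩ | ⟨e3a, e3b⟩ | ⟨e3a, e3b⟩
        · exact absurd (show ((1:ZMod m)) = 0 by linear_combination -e0a + e0b + e1a + e2a + e3a) hne1
        · exact absurd (show ((1:ZMod m)) = 0 by linear_combination -e1a -e2a + e2b -e3a) hne1
        · exact absurd (show ((2:ZMod m)) = 0 by linear_combination -e0a + e0b + e2b -e3a) hne2
      · rcases h4 with ⟨e3a, e3b⟩ | ⟨e3a, e3b⟩ | ⟨e3a, e3b⟩
        · exact absurd (show ((2:ZMod m)) = 0 by linear_combination -e0a + e0b + e1a + e2b + e3a) hne2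
        · exact absurd (show ((1:ZMod m)) = 0 by linear_combination e1a -e2a + e2b + e3a) hne1
        · exact absurd (show ((1:ZMod m)) = 0 by linear_combination -e0a + e0b + e2a -e3a) hne1
      · rcases h4 with ⟨e3a, e3b⟩ | ⟨e3a, e3b⟩ | ⟨e3a, e3b⟩
        · exact absurd (show ((1:ZMod m)) = 0 by linear_combination e1a -e2a + e3b) hne1
        · exact absurd (show ((1:ZMod m)) = 0 by linear_combination -e0a + e0b + e1a -e2b + e3b) hne1
        · exact absurd (show ((1:ZMod m)) = 0 by linear_combination e0a -e0b -e1a + e2b + e3b) hne1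
    · rcases h3 with ⟨e2a, e2b⟩ | ⟨e2a, e2b⟩ | ⟨e2a, e2b⟩
      · rcases h4 with ⟨e3a, e3b⟩ | ⟨e3a, e3b⟩ | ⟨e3a, e3b⟩
        · exact absurd (show ((1:ZMod m)) = 0 by linear_combination e1b + e2a -e2b + e3b) hne1
        · rcases h5 with ⟨e4a, e4b⟩ | ⟨e4a, e4b⟩ | ⟨e4a, e4b⟩
          · exact absurd (show ((1:ZMod m)) = 0 by linear_combination e0b + e2a + e4a) hne1
          · exact absurd (show ((1:ZMod m)) = 0 by linear_combination -e0a + e1b + e3b -e4b) hne1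
          · rcases h6 with ⟨e5a, e5b⟩ | ⟨e5a, e5b⟩ | ⟨e5a, e5b⟩
            · exact absurd (show ((1:ZMod m)) = 0 by linear_combination -e0a + e0b + e1a + e2a -e5a) hne1
            · rcases h7 with ⟨e6a, e6b⟩ | ⟨e6a, e6b⟩ | ⟨e6a, e6b⟩
              · exact absurd (show ((1:ZMod m)) = 0 by linear_combination e0a + e0b + e1b + e2a -e3b -(2:ZMod m) * e6a) hne1
              · exact absurd (show ((1:ZMod m)) = 0 by linear_combination e0b + e1b + e2a -e6b) hne1
              · rcases h8 with ⟨e7a, e7b⟩ | ⟨e7a, e7b⟩ | ⟨e7a, e7b⟩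
                · exact Or.inr (Or.inl ⟨by linear_combination e1b + e2a -e2b + e6a, by linear_combination -e0a + e1b + e2a -e2b + e3b + e4a⟩)
                · exact absurd (show ((1:ZMod m)) = 0 by linear_combination -e1a + e1b + e6a -e7a) hne1
                · exact absurd (show ((1:ZMod m)) = 0 by linear_combination e1b + e2a + e6a -e7a) hne1
            · exact absurd (show ((1:ZMod m)) = 0 by linear_combination e0b + e1a + e2a -e4a + e5a) hne1
        · exact absurd (show ((1:ZMod m)) = 0 by linear_combination -e0a + e0b + e1b + e2a -e3b) hne1
      · rcases h4 with ⟨e3a, e3b⟩ | ⟨e3a, e3b⟩ | ⟨e3a, e3b⟩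
        · rcases h5 with ⟨e4a, e4b⟩ | ⟨e4a, e4b⟩ | ⟨e4a, e4b⟩
          · exact absurd (show ((1:ZMod m)) = 0 by linear_combination -e0b + e1b -e2a + e3b -e4a) hne1
          · rcases h6 with ⟨e5a, e5b⟩ | ⟨e5a, e5b⟩ | ⟨e5a, e5b⟩
            · exact absurd (show ((1:ZMod m)) = 0 by linear_combination -e0a + e0b + e2b + e4a -e5b) hne1
            · exact absurd (show ((1:ZMod m)) = 0 by linear_combination -e0a + e0b + e1a + e2b -e5b) hne1
            · rcases h7 with ⟨e6a, e6b⟩ | ⟨e6a, e6b⟩ | ⟨e6a, e6b⟩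
              · rcases h8 with ⟨e7a, e7b⟩ | ⟨e7a, e7b⟩ | ⟨e7a, e7b⟩
                · exact absurd (show ((1:ZMod m)) = 0 by linear_combination e1a + e2b + e7a) hne1
                · exact absurd (show ((1:ZMod m)) = 0 by linear_combination e0b + e1a + e2b -e6b + e7a) hne1
                · exact Or.inr (Or.inl ⟨by linear_combination -e0b -e2a + e6b, by linear_combination -e2a + e2b + e4a⟩)
              · exact absurd (show ((1:ZMod m)) = 0 by linear_combination e0b + (2:ZMod m) * e1b + e2b -e4b -(2:ZMod m) * e6b) hne1
              · exact absurd (show ((1:ZMod m)) = 0 by linear_combination e0a -e3a + e6b) hne1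
          · exact absurd (show ((1:ZMod m)) = 0 by linear_combination e0b + e2b -e4b) hne1
        · exact absurd (show ((2:ZMod m)) = 0 by linear_combination e1b -e2a + e2b + e3a) hne2
        · exact absurd (show ((1:ZMod m)) = 0 by linear_combination -e0a + e0b + e2a -e3a) hne1
      · rcases h4 with ⟨e3a, e3b⟩ | ⟨e3a, e3b⟩ | ⟨e3a, e3b⟩
        · exact absurd (show ((1:ZMod m)) = 0 by linear_combination -e0a + e0b + e1b -e2b + e3a) hne1
        · exact absurd (show ((1:ZMod m)) = 0 by linear_combination e1b -e2a + e3a) hne1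
        · rcases h5 with ⟨e4a, e4b⟩ | ⟨e4a, e4b⟩ | ⟨e4a, e4b⟩
          · rcases h6 with ⟨e5a, e5b⟩ | ⟨e5a, e5b⟩ | ⟨e5a, e5b⟩
            · rcases h7 with ⟨e6a, e6b⟩ | ⟨e6a, e6b⟩ | ⟨e6a, e6b⟩
              · exact absurd (show ((1:ZMod m)) = 0 by linear_combination e0b + e1b -e2b -e6a) hne1
              · rcases h8 with ⟨e7a, e7b⟩ | ⟨e7a, e7b⟩ | ⟨e7a, e7b⟩
                · exact absurd (show ((1:ZMod m)) = 0 by linear_combination -e1a + e2b -e7a) hne1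
                · exact Or.inr (Or.inl ⟨by linear_combination -e0b -e2a + e2b + e6a, by linear_combination -e2a + e4b⟩)
                · exact absurd (show ((1:ZMod m)) = 0 by linear_combination e0b -e6a + e7a) hne1
              · exact absurd (show ((2:ZMod m)) = 0 by linear_combination e0b + e1b -e2b + e6b) hne2
            · exact absurd (show ((1:ZMod m)) = 0 by linear_combination -e0a + e0b -e2b + e4b -e5a) hne1
            · exact absurd (show ((1:ZMod m)) = 0 by linear_combination -e1a + e4b -e5a) hne1
          · exact absurd (show ((1:ZMod m)) = 0 by linear_combination e0b -e2b + e4b) hne1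
          · exact absurd (show ((1:ZMod m)) = 0 by linear_combination -e0b + e2b + e4b) hne1
    · rcases h3 with ⟨e2a, e2b⟩ | ⟨e2a, e2b⟩ | ⟨e2a, e2b⟩
      · rcases h4 with ⟨e3a, e3b⟩ | ⟨e3a, e3b⟩ | ⟨e3a, e3b⟩
        · exact absurd (show ((1:ZMod m)) = 0 by linear_combination e1b -e2a + e2b -e3b) hne1
        · exact absurd (show ((1:ZMod m)) = 0 by linear_combination -e0a + e0b -e1b + e2a + e3b) hne1
        · exact absurd (show ((1:ZMod m)) = 0 by linear_combination e0a -e0b + e1b -e2a + e3b) hne1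
      · rcases h4 with ⟨e3a, e3b⟩ | ⟨e3a, e3b⟩ | ⟨e3a, e3b⟩
        · exact absurd (show ((1:ZMod m)) = 0 by linear_combination -e0a + e0b -e1b + e2b + e3a) hne1
        · exact absurd (show ((2:ZMod m)) = 0 by linear_combination -e0a + e0b -e1b + e2b + e3b) hne2
        · exact absurd (show ((1:ZMod m)) = 0 by linear_combination -e0a + e0b + e2a -e3a) hne1
      · rcases h4 with ⟨e3a, e3b⟩ | ⟨e3a, e3b⟩ | ⟨e3a, e3b⟩
        · exact absurd (show ((1:ZMod m)) = 0 by linear_combination e0a -e0b + e1b + e2b -e3a) hne1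
        · exact absurd (show ((1:ZMod m)) = 0 by linear_combination e1b + e2a -e3a) hne1
        · exact absurd (show ((2:ZMod m)) = 0 by linear_combination e0a -e0b + e1b + e2b + e3b) hne2

/-- If `M` satisfies the projective Pappus axiom, then in `Π(m,M)` the three diagonal
points of every hexagon inscribed into two lines are on a line. -/
theorem weave_pappus {P : Type*} (L : Set (Set P)) (m : ℕ)
    (hM : IsPSTS L) (hm : 2 < m) (hpap : PappusAxiom L)
    (p1 p2 p3 p4 p5 p6 q1 q2 q3 : P × ZMod m)
    (hdist : List.Pairwise (· ≠ ·) [p1, p2, p3, p4, p5, p6])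
    (h135 : ({p1, p3, p5} : Set (P × ZMod m)) ∈ weaveLines m L)
    (h246 : ({p2, p4, p6} : Set (P × ZMod m)) ∈ weaveLines m L)
    (hq1a : ∃ l ∈ weaveLines m L, p1 ∈ l ∧ p2 ∈ l ∧ q1 ∈ l)
    (hq1b : ∃ l ∈ weaveLines m L, p4 ∈ l ∧ p5 ∈ l ∧ q1 ∈ l)
    (hq2a : ∃ l ∈ weaveLines m L, p2 ∈ l ∧ p3 ∈ l ∧ q2 ∈ l)
    (hq2b : ∃ l ∈ weaveLines m L, p5 ∈ l ∧ p6 ∈ l ∧ q2 ∈ l)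
    (hq3a : ∃ l ∈ weaveLines m L, p3 ∈ l ∧ p4 ∈ l ∧ q3 ∈ l)
    (hq3b : ∃ l ∈ weaveLines m L, p6 ∈ l ∧ p1 ∈ l ∧ q3 ∈ l) :
    ({q1, q2, q3} : Set (P × ZMod m)) ∈ weaveLines m L := by
  obtain ⟨l1, hl1, hp1l1, hp2l1, hq1l1⟩ := hq1a
  obtain ⟨l2, hl2, hp4l2, hp5l2, hq1l2⟩ := hq1b
  obtain ⟨l3, hl3, hp2l3, hp3l3, hq2l3⟩ := hq2a
  obtain ⟨l4, hl4, hp5l4, hp6l4, hq2l4⟩ := hq2b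
  obtain ⟨l5, hl5, hp3l5, hp4l5, hq3l5⟩ := hq3a
  obtain ⟨l6, hl6, hp6l6, hp1l6, hq3l6⟩ := hq3b
  simp only [List.pairwise_cons, List.mem_cons, List.not_mem_nil,
    forall_eq_or_imp, forall_eq, IsEmpty.forall_iff, implies_true, and_true,
    ne_eq] at hdist
  obtain ⟨⟨d12, d13, d14, d15, d16⟩, ⟨d23, d24, d25, d26⟩, ⟨d34, d35, d36⟩,
    ⟨d45, d46⟩, d56, -⟩ := hdist
  have hne1 : (1 : ZMod m) ≠ 0 := by
    intro h
    rw [show ((1 : ZMod m)) = ((1 : ℕ) : ZMod m) by norm_cast,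
      ZMod.natCast_eq_zero_iff] at h
    rw [Nat.dvd_one] at h
    omega
  have hne2 : (2 : ZMod m) ≠ 0 := by
    intro h
    rw [show ((2 : ZMod m)) = ((2 : ℕ) : ZMod m) by norm_cast,
      ZMod.natCast_eq_zero_iff] at h
    have := Nat.le_of_dvd (by norm_num) h
    omega
  obtain ⟨B135, n13, n15, n35, W135⟩ :=
    wp_struct hM h135 (by simp) (by simp) (by simp) d13 d15 d35
  obtain ⟨B246, n24, n26, n46, W246⟩ :=
    wp_struct hM h246 (by simp) (by simp) (by simp) d24 d26 d46
  have n12 := wp_base_ne hM hl1 hp1l1 hp2l1 d12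
  have n23 := wp_base_ne hM hl3 hp2l3 hp3l3 d23
  have n34 := wp_base_ne hM hl5 hp3l5 hp4l5 d34
  have n45 := wp_base_ne hM hl2 hp4l2 hp5l2 d45
  have n56 := wp_base_ne hM hl4 hp5l4 hp6l4 d56
  have n61 := wp_base_ne hM hl6 hp6l6 hp1l6 (Ne.symm d16)
  -- q1, q2, q3 are distinct from the relevant hexagon vertices
  have nq1p1 : q1 ≠ p1 := by
    intro he
    obtain ⟨hB, -, -, -, -⟩ := wp_struct hM hl2 (he ▸ hq1l2) hp4l2 hp5l2 d14 d15 d45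
    have h := wp_mem_of_line_eq hM hB B135 n15 (by simp) (by simp) (by simp) (by simp)
      (show p3.1 ∈ ({p1.1, p3.1, p5.1} : Set P) by simp)
    simp only [Set.mem_insert_iff, Set.mem_singleton_iff] at h
    rcases h with h | h | h
    exacts [n13 h.symm, n34 h, n35 h]
  have nq1p2 : q1 ≠ p2 := by
    intro he
    obtain ⟨hB, -, -, -, -⟩ := wp_struct hM hl2 (he ▸ hq1l2) hp4l2 hp5l2 d24 d25 d45
    have h := wp_mem_of_line_eq hM hB B246 n24 (by simp) (by simp) (by simp) (by simp)
      (show p6.1 ∈ ({p2.1, p4.1, p6.1} : Set P) by simp)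
    simp only [Set.mem_insert_iff, Set.mem_singleton_iff] at h
    rcases h with h | h | h
    exacts [n26 h.symm, n46 h.symm, n56 h.symm]
  have nq1p4 : q1 ≠ p4 := by
    intro he
    obtain ⟨hB, -, -, -, -⟩ := wp_struct hM hl1 hp1l1 hp2l1 (he ▸ hq1l1) d12 d14 d24
    have h := wp_mem_of_line_eq hM hB B246 n24 (by simp) (by simp) (by simp) (by simp)
      (show p6.1 ∈ ({p2.1, p4.1, p6.1} : Set P) by simp)
    simp only [Set.mem_insert_iff, Set.mem_singleton_iff] at h
    rcases h with h | h | h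
    exacts [n61 h, n26 h.symm, n46 h.symm]
  have nq1p5 : q1 ≠ p5 := by
    intro he
    obtain ⟨hB, -, -, -, -⟩ := wp_struct hM hl1 hp1l1 hp2l1 (he ▸ hq1l1) d12 d15 d25
    have h := wp_mem_of_line_eq hM hB B135 n15 (by simp) (by simp) (by simp) (by simp)
      (show p3.1 ∈ ({p1.1, p3.1, p5.1} : Set P) by simp)
    simp only [Set.mem_insert_iff, Set.mem_singleton_iff] at h
    rcases h with h | h | h
    exacts [n13 h.symm, n23 h.symm, n35 h]
  have nq2p2 : q2 ≠ p2 := by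
    intro he
    obtain ⟨hB, -, -, -, -⟩ := wp_struct hM hl4 (he ▸ hq2l4) hp5l4 hp6l4 d25 d26 d56
    have h := wp_mem_of_line_eq hM hB B246 n26 (by simp) (by simp) (by simp) (by simp)
      (show p4.1 ∈ ({p2.1, p4.1, p6.1} : Set P) by simp)
    simp only [Set.mem_insert_iff, Set.mem_singleton_iff] at h
    rcases h with h | h | h
    exacts [n24 h.symm, n45 h, n46 h]
  have nq2p3 : q2 ≠ p3 := by
    intro he
    obtain ⟨hB, -, -, -, -⟩ := wp_struct hM hl4 (he ▸ hq2l4) hp5l4 hp6l4 d35 d36 d56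
    have h := wp_mem_of_line_eq hM hB B135 n35 (by simp) (by simp) (by simp) (by simp)
      (show p1.1 ∈ ({p1.1, p3.1, p5.1} : Set P) by simp)
    simp only [Set.mem_insert_iff, Set.mem_singleton_iff] at h
    rcases h with h | h | h
    exacts [n13 h, n15 h, n61 h.symm]
  have nq2p5 : q2 ≠ p5 := by
    intro he
    obtain ⟨hB, -, -, -, -⟩ := wp_struct hM hl3 hp2l3 hp3l3 (he ▸ hq2l3) d23 d25 d35
    have h := wp_mem_of_line_eq hM hB B135 n35 (by simp) (by simp) (by simp) (by simp)
      (show p1.1 ∈ ({p1.1, p3.1, p5.1} : Set P) by simp)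
    simp only [Set.mem_insert_iff, Set.mem_singleton_iff] at h
    rcases h with h | h | h
    exacts [n12 h, n13 h, n15 h]
  have nq2p6 : q2 ≠ p6 := by
    intro he
    obtain ⟨hB, -, -, -, -⟩ := wp_struct hM hl3 hp2l3 hp3l3 (he ▸ hq2l3) d23 d26 d36
    have h := wp_mem_of_line_eq hM hB B246 n26 (by simp) (by simp) (by simp) (by simp)
      (show p4.1 ∈ ({p2.1, p4.1, p6.1} : Set P) by simp)
    simp only [Set.mem_insert_iff, Set.mem_singleton_iff] at h
    rcases h with h | h | h
    exacts [n24 h.symm, n34 h.symm, n46 h]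
  have nq3p3 : q3 ≠ p3 := by
    intro he
    obtain ⟨hB, -, -, -, -⟩ := wp_struct hM hl6 hp6l6 hp1l6 (he ▸ hq3l6)
      (Ne.symm d16) (Ne.symm d36) d13
    have h := wp_mem_of_line_eq hM hB B135 n13 (by simp) (by simp) (by simp) (by simp)
      (show p5.1 ∈ ({p1.1, p3.1, p5.1} : Set P) by simp)
    simp only [Set.mem_insert_iff, Set.mem_singleton_iff] at h
    rcases h with h | h | h
    exacts [n56 h, n15 h.symm, n35 h.symm]
  have nq3p4 : q3 ≠ p4 := by
    intro he
    obtain ⟨hB, -, -, -, -⟩ := wp_struct hM hl6 hp6l6 hp1l6 (he ▸ hq3l6)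
      (Ne.symm d16) (Ne.symm d46) d14
    have h := wp_mem_of_line_eq hM hB B246 n46 (by simp) (by simp) (by simp) (by simp)
      (show p2.1 ∈ ({p2.1, p4.1, p6.1} : Set P) by simp)
    simp only [Set.mem_insert_iff, Set.mem_singleton_iff] at h
    rcases h with h | h | h
    exacts [n26 h, n12 h.symm, n24 h]
  have nq3p6 : q3 ≠ p6 := by
    intro he
    obtain ⟨hB, -, -, -, -⟩ := wp_struct hM hl5 hp3l5 hp4l5 (he ▸ hq3l5) d34 d36 d46
    have h := wp_mem_of_line_eq hM hB B246 n46 (by simp) (by simp) (by simp) (by simp)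
      (show p2.1 ∈ ({p2.1, p4.1, p6.1} : Set P) by simp)
    simp only [Set.mem_insert_iff, Set.mem_singleton_iff] at h
    rcases h with h | h | h
    exacts [n23 h, n24 h, n26 h]
  have nq3p1 : q3 ≠ p1 := by
    intro he
    obtain ⟨hB, -, -, -, -⟩ := wp_struct hM hl5 hp3l5 hp4l5 (he ▸ hq3l5) d34
      (Ne.symm d13) (Ne.symm d14)
    have h := wp_mem_of_line_eq hM hB B135 n13.symm (by simp) (by simp) (by simp) (by simp)
      (show p5.1 ∈ ({p1.1, p3.1, p5.1} : Set P) by simp)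
    simp only [Set.mem_insert_iff, Set.mem_singleton_iff] at h
    rcases h with h | h | h
    exacts [n35 h.symm, n45 h.symm, n15 h.symm]
  -- full structure of the six diagonal lines
  obtain ⟨Bq1a, -, nb1q1, nb2q1, W3⟩ :=
    wp_struct hM hl1 hp1l1 hp2l1 hq1l1 d12 (Ne.symm nq1p1) (Ne.symm nq1p2)
  obtain ⟨Bq1b, -, nb4q1, nb5q1, W4⟩ :=
    wp_struct hM hl2 hp4l2 hp5l2 hq1l2 d45 (Ne.symm nq1p4) (Ne.symm nq1p5)
  obtain ⟨Bq2a, -, nb2q2, nb3q2, W5⟩ :=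
    wp_struct hM hl3 hp2l3 hp3l3 hq2l3 d23 (Ne.symm nq2p2) (Ne.symm nq2p3)
  obtain ⟨Bq2b, -, nb5q2, nb6q2, W6⟩ :=
    wp_struct hM hl4 hp5l4 hp6l4 hq2l4 d56 (Ne.symm nq2p5) (Ne.symm nq2p6)
  obtain ⟨Bq3a, -, nb3q3, nb4q3, W7⟩ :=
    wp_struct hM hl5 hp3l5 hp4l5 hq3l5 d34 (Ne.symm nq3p3) (Ne.symm nq3p4)
  obtain ⟨Bq3b, -, nb6q3, nb1q3, W8⟩ :=
    wp_struct hM hl6 hp6l6 hp1l6 hq3l6 (Ne.symm d16) (Ne.symm nq3p6) (Ne.symm nq3p1)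
  have Wq := weave_key hne1 hne2 p1.2 p2.2 p3.2 p4.2 p5.2 p6.2 q1.2 q2.2 q3.2
    W135 W246 W3 W4 W5 W6 W7 W8
  suffices hQ : ({q1.1, q2.1, q3.1} : Set P) ∈ L by
    exact ⟨q1.1, q2.1, q3.1, q1.2, q2.2, q3.2, hQ, Wq, by simp⟩
  -- degenerate case: opposite vertices over the same base point
  have main14 : p1.1 = p4.1 → ({q1.1, q2.1, q3.1} : Set P) ∈ L := by
    intro c14
    have hq16 : q1.1 = p6.1 := by
      have h := wp_mem_of_line_eq hM B246 Bq1a n24 (by simp) (by simp) (by simp)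
        (by simp [← c14])
        (show q1.1 ∈ ({p1.1, p2.1, q1.1} : Set P) by simp)
      simp only [Set.mem_insert_iff, Set.mem_singleton_iff] at h
      rcases h with h | h | h
      exacts [absurd h.symm nb2q1, absurd (c14.trans h.symm) nb1q1, h]
    have hq13 : q1.1 = p3.1 := by
      have h := wp_mem_of_line_eq hM B135 Bq1b n15 (by simp) (by simp)
        (by simp [c14]) (by simp)
        (show q1.1 ∈ ({p4.1, p5.1, q1.1} : Set P) by simp)
      simp only [Set.mem_insert_iff, Set.mem_singleton_iff] at h
      rcases h with h | h | h
      exacts [absurd (c14.symm.trans h.symm) nb4q1, h, absurd h.symm nb5q1]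
    have hq35 : q3.1 = p5.1 := by
      have h := wp_mem_of_line_eq hM B135 Bq3a n13 (by simp) (by simp)
        (by simp [c14]) (by simp)
        (show q3.1 ∈ ({p3.1, p4.1, q3.1} : Set P) by simp)
      simp only [Set.mem_insert_iff, Set.mem_singleton_iff] at h
      rcases h with h | h | h
      exacts [absurd (c14.symm.trans h.symm) nb4q3, absurd h.symm nb3q3, h]
    have hq32 : q3.1 = p2.1 := by
      have h := wp_mem_of_line_eq hM B246 Bq3b n46 (by simp) (by simp)
        (by simp [← c14]) (by simp)
        (show q3.1 ∈ ({p6.1, p1.1, q3.1} : Set P) by simp)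
      simp only [Set.mem_insert_iff, Set.mem_singleton_iff] at h
      rcases h with h | h | h
      exacts [h, absurd (c14.trans h.symm) nb1q3, absurd h.symm nb6q3]
    have c25 : p2.1 = p5.1 := hq32.symm.trans hq35
    have hq21 : q2.1 = p1.1 := by
      have h := wp_mem_of_line_eq hM B135 Bq2a (Ne.symm n35) (by simp) (by simp)
        (by simp [← c25]) (by simp)
        (show q2.1 ∈ ({p2.1, p3.1, q2.1} : Set P) by simp)
      simp only [Set.mem_insert_iff, Set.mem_singleton_iff] at h
      rcases h with h | h | h
      exacts [h, absurd h.symm nb3q2, absurd (c25.trans h.symm) nb2q2]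
    rw [hq13, hq21, hq35]
    rw [Set.insert_comm]; exact B135
  by_cases c14 : p1.1 = p4.1
  · exact main14 c14
  have main25 : p2.1 = p5.1 → ({q1.1, q2.1, q3.1} : Set P) ∈ L := by
    intro c25
    apply main14
    have hq21 : q2.1 = p1.1 := by
      have h := wp_mem_of_line_eq hM B135 Bq2a (Ne.symm n35) (by simp) (by simp)
        (by simp [← c25]) (by simp)
        (show q2.1 ∈ ({p2.1, p3.1, q2.1} : Set P) by simp)
      simp only [Set.mem_insert_iff, Set.mem_singleton_iff] at h
      rcases h with h | h | h
      exacts [h, absurd h.symm nb3q2, absurd (c25.trans h.symm) nb2q2]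
    have hq24 : q2.1 = p4.1 := by
      have h := wp_mem_of_line_eq hM B246 Bq2b n26 (by simp) (by simp)
        (by simp [c25]) (by simp)
        (show q2.1 ∈ ({p5.1, p6.1, q2.1} : Set P) by simp)
      simp only [Set.mem_insert_iff, Set.mem_singleton_iff] at h
      rcases h with h | h | h
      exacts [absurd (c25.symm.trans h.symm) nb5q2, h, absurd h.symm nb6q2]
    exact hq21.symm.trans hq24
  by_cases c25 : p2.1 = p5.1
  · exact main25 c25
  by_cases c36 : p3.1 = p6.1
  · apply main25
    have hq35 : q3.1 = p5.1 := by
      have h := wp_mem_of_line_eq hM B135 Bq3b n13 (by simp) (by simp)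
        (by simp) (by simp [← c36])
        (show q3.1 ∈ ({p6.1, p1.1, q3.1} : Set P) by simp)
      simp only [Set.mem_insert_iff, Set.mem_singleton_iff] at h
      rcases h with h | h | h
      exacts [absurd h.symm nb1q3, absurd (c36.symm.trans h.symm) nb6q3, h]
    have hq32 : q3.1 = p2.1 := by
      have h := wp_mem_of_line_eq hM B246 Bq3a n46 (by simp) (by simp)
        (by simp) (by simp [c36])
        (show q3.1 ∈ ({p3.1, p4.1, q3.1} : Set P) by simp)
      simp only [Set.mem_insert_iff, Set.mem_singleton_iff] at h
      rcases h with h | h | h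
      exacts [h, absurd h.symm nb4q3, absurd (c36.trans h.symm) nb3q3]
    exact hq32.symm.trans hq35
  -- nondegenerate case: apply the Pappus axiom of the base system
  have hdistb : List.Pairwise (· ≠ ·) [p1.1, p2.1, p3.1, p4.1, p5.1, p6.1] := by
    simp only [List.pairwise_cons, List.mem_cons, List.not_mem_nil,
      forall_eq_or_imp, forall_eq, IsEmpty.forall_iff, implies_true, and_true,
      ne_eq]
    exact ⟨⟨n12, n13, c14, n15, Ne.symm n61⟩, ⟨n23, n24, c25, n26⟩,
      ⟨n34, n35, c36⟩, ⟨n45, n46⟩, n56, trivial, List.Pairwise.nil⟩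
  exact hpap p1.1 p2.1 p3.1 p4.1 p5.1 p6.1 q1.1 q2.1 q3.1 hdistb
    B135 B246 Bq1a Bq1b Bq2a Bq2b Bq3a Bq3b
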